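/- arXiv:2309.00989 — 4 statements merged into one kernel-verified Lean document; each statement's English description precedes it below -/
import Mathlib

section
/- If a finite simple graph G with at least one vertex belongs to class B, then the minimum degree of G is at most 6. -/
open Finset

/-- `G` belongs to class ℬ: for all disjoint vertex sets `X, Y` with `|X ∪ Y| ≥ 3`,
the number of edges of `G` with one endpoint in `X` and the other in `Y` is at
most `2|X ∪ Y| - 4`. -/
def SimpleGraph.InClassB {V : Type*} [DecidableEq V] (G : SimpleGraph V)
    [DecidableRel G.Adj] : Prop :=
  ∀ X Y : Finset V, Disjoint X Y → 3 ≤ (X ∪ Y).card →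
    ((X ×ˢ Y).filter (fun e => G.Adj e.1 e.2)).card ≤ 2 * (X ∪ Y).card - 4

section Aux
set_option linter.unusedSectionVars false

variable {V : Type*} [Fintype V] [DecidableEq V]

private def gcut (G : SimpleGraph V) [DecidableRel G.Adj] (X : Finset V) : ℕ :=
  ∑ x ∈ X, ((univ \ X).filter (G.Adj x)).card

private lemma gcut_def (G : SimpleGraph V) [DecidableRel G.Adj] (X : Finset V) :
    gcut G X = ∑ x ∈ X, ((univ \ X).filter (G.Adj x)).card := rfl

private lemma cut_card (G : SimpleGraph V) [DecidableRel G.Adj] (X Y : Finset V) :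
    ((X ×ˢ Y).filter (fun e => G.Adj e.1 e.2)).card
      = ∑ x ∈ X, (Y.filter (G.Adj x)).card := by
  rw [Finset.card_filter, Finset.sum_product]
  simp only [Finset.card_filter]

private lemma cut_symm (G : SimpleGraph V) [DecidableRel G.Adj] (X Y : Finset V) :
    ∑ x ∈ X, (Y.filter (G.Adj x)).card = ∑ y ∈ Y, (X.filter (G.Adj y)).card := by
  simp only [Finset.card_filter]
  rw [Finset.sum_comm]
  exact Finset.sum_congr rfl fun y _ => Finset.sum_congr rfl fun x _ => by simp [G.adj_comm]

private lemma univ_sdiff_sdiff (X : Finset V) : univ \ (univ \ X) = X := by simp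

private lemma gcut_compl (G : SimpleGraph V) [DecidableRel G.Adj] (X : Finset V) :
    gcut G (univ \ X) = gcut G X := by
  unfold gcut
  rw [univ_sdiff_sdiff, cut_symm]

private lemma cross_ge_of_mem (G : SimpleGraph V) [DecidableRel G.Adj]
    {X : Finset V} (hmax : ∀ Z : Finset V, gcut G Z ≤ gcut G X)
    {v : V} (hv : v ∈ X) :
    G.degree v ≤ 2 * ((univ \ X).filter (G.Adj v)).card := by
  set X' := X.erase v with hX'
  have hcompl : univ \ X' = insert v (univ \ X) := by
    ext x
    simp only [mem_sdiff, mem_univ, true_and, mem_erase, mem_insert, hX']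
    by_cases hx : x = v
    · subst hx; simp [hv]
    · simp [hx]
  have hstep : ∀ x ∈ X', ((univ \ X').filter (G.Adj x)).card
      = ((univ \ X).filter (G.Adj x)).card + (if G.Adj x v then 1 else 0) := by
    intro x hx
    rw [hcompl, Finset.filter_insert]
    split_ifs with h
    · rw [Finset.card_insert_of_notMem (by simp [hv])]
    · simp
  have hsum : gcut G X' = (∑ x ∈ X', ((univ \ X).filter (G.Adj x)).card)
      + (X'.filter (fun x => G.Adj x v)).card := by
    rw [gcut_def, Finset.sum_congr rfl hstep, Finset.sum_add_distrib, Finset.card_filter]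
  have htot : gcut G X = ((univ \ X).filter (G.Adj v)).card
      + ∑ x ∈ X', ((univ \ X).filter (G.Adj x)).card := by
    rw [gcut_def, ← Finset.add_sum_erase _ _ hv]
  have hkey : (X'.filter (fun x => G.Adj x v)).card ≤ ((univ \ X).filter (G.Adj v)).card := by
    have := hmax X'
    omega
  have hfe : X.filter (G.Adj v) = X'.filter (fun x => G.Adj x v) := by
    ext x
    simp only [mem_filter, hX', mem_erase]
    constructor
    · rintro ⟨hx, ha⟩; exact ⟨⟨(G.ne_of_adj ha).symm, hx⟩, ha.symm⟩
    · rintro ⟨⟨_, hx⟩, ha⟩; exact ⟨hx, ha.symm⟩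
  have hdeg : G.degree v = (X.filter (G.Adj v)).card + ((univ \ X).filter (G.Adj v)).card := by
    rw [← SimpleGraph.card_neighborFinset_eq_degree, SimpleGraph.neighborFinset_eq_filter]
    conv_lhs => rw [show (univ : Finset V) = X ∪ (univ \ X) from
      (Finset.union_sdiff_of_subset (subset_univ X)).symm]
    rw [Finset.filter_union, Finset.card_union_of_disjoint
      (Finset.disjoint_filter_filter Finset.disjoint_sdiff)]
  rw [hdeg, hfe]
  omega

end Aux

theorem classB_minDegree_le_six {V : Type*} [Fintype V] [DecidableEq V] [Nonempty V]
    (G : SimpleGraph V) [DecidableRel G.Adj] (hG : G.InClassB) :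
    G.minDegree ≤ 6 := by
  by_contra h
  push_neg at h
  have hδ : ∀ v : V, 7 ≤ G.degree v := fun v => le_trans h (G.minDegree_le_degree v)
  have hn : 8 ≤ Fintype.card V := by
    obtain ⟨v⟩ := ‹Nonempty V›
    have h1 := G.degree_lt_card_verts v
    have h2 := hδ v
    omega
  obtain ⟨X, -, hmax⟩ :=
    Finset.exists_max_image (univ : Finset (Finset V)) (gcut G) ⟨∅, mem_univ ∅⟩
  have hmax' : ∀ Z : Finset V, gcut G Z ≤ gcut G X := fun Z => hmax Z (mem_univ Z)
  have hX1 : ∀ v ∈ X, 4 ≤ ((univ \ X).filter (G.Adj v)).card := by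
    intro v hv
    have h1 := cross_ge_of_mem G hmax' hv
    have h2 := hδ v
    omega
  have hmax2 : ∀ Z : Finset V, gcut G Z ≤ gcut G (univ \ X) := by
    intro Z; rw [gcut_compl]; exact hmax' Z
  have hX2 : ∀ v ∈ univ \ X, 4 ≤ (X.filter (G.Adj v)).card := by
    intro v hv
    have h2 := cross_ge_of_mem G hmax2 hv
    rw [univ_sdiff_sdiff] at h2
    have h3 := hδ v
    omega
  have hg1 : 4 * X.card ≤ gcut G X := by
    calc 4 * X.card = ∑ _x ∈ X, 4 := by rw [Finset.sum_const, smul_eq_mul, mul_comm]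
    _ ≤ gcut G X := Finset.sum_le_sum hX1
  have hg2 : 4 * (univ \ X).card ≤ gcut G X := by
    rw [← gcut_compl (G := G) X, gcut_def, univ_sdiff_sdiff]
    calc 4 * (univ \ X).card = ∑ _x ∈ univ \ X, 4 := by
          rw [Finset.sum_const, smul_eq_mul, mul_comm]
    _ ≤ _ := Finset.sum_le_sum hX2
  have hle : X.card ≤ Fintype.card V := Finset.card_le_univ X
  have hcards : X.card + (univ \ X).card = Fintype.card V := by
    rw [Finset.card_sdiff_of_subset (subset_univ X), Finset.card_univ]
    omega
  have hun : X ∪ (univ \ X) = univ := Finset.union_sdiff_of_subset (subset_univ X)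
  have hB := hG X (univ \ X) Finset.disjoint_sdiff (by rw [hun, card_univ]; omega)
  rw [cut_card, ← gcut_def, hun, card_univ] at hB
  omega
end

section
/- Let G be a finite simple graph containing no subgraph isomorphic to K_{3,3}, let z be a vertex of G, and let S be a set of neighbors of z with |S| ≥ 5. Then at most one vertex y ∈ S is adjacent to every vertex of S ∖ {y}. In particular, the number of y ∈ S that are nonadjacent to some other vertex of S is at least |S| − 1. -/
open Finset

/-- `G` contains a subgraph isomorphic to `K₃,₃`: there is an injective graph
homomorphism from the complete bipartite graph `K₃,₃` to `G`. -/
def SimpleGraph.ContainsK33 {V : Type*} (G : SimpleGraph V) : Prop :=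
  ∃ φ : (Fin 3 ⊕ Fin 3) → V, Function.Injective φ ∧
    ∀ a b, (completeBipartiteGraph (Fin 3) (Fin 3)).Adj a b → G.Adj (φ a) (φ b)

set_option maxHeartbeats 1000000 in
private lemma elim_inj {V : Type*} (u0 u1 u2 v0 v1 v2 : V)
    (h01 : u0 ≠ u1) (h02 : u0 ≠ u2) (h12 : u1 ≠ u2)
    (k01 : v0 ≠ v1) (k02 : v0 ≠ v2) (k12 : v1 ≠ v2)
    (m00 : u0 ≠ v0) (m01 : u0 ≠ v1) (m02 : u0 ≠ v2)
    (m10 : u1 ≠ v0) (m11 : u1 ≠ v1) (m12 : u1 ≠ v2)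
    (m20 : u2 ≠ v0) (m21 : u2 ≠ v1) (m22 : u2 ≠ v2) :
    Function.Injective (Sum.elim ![u0, u1, u2] ![v0, v1, v2]) := by
  intro x y hxy
  rcases x with x | x <;> rcases y with y | y <;>
    fin_cases x <;> fin_cases y <;> simp_all

theorem no_K33_few_dominating {V : Type*} [Fintype V] [DecidableEq V] (G : SimpleGraph V)
    [DecidableRel G.Adj] (hG : ¬ G.ContainsK33) (z : V) (S : Finset V)
    (hS : ∀ y ∈ S, G.Adj z y) (hcard : 5 ≤ S.card) :
    (S.filter (fun y => ∀ y' ∈ S.erase y, G.Adj y y')).card ≤ 1 ∧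
    S.card - 1 ≤ (S.filter (fun y => ∃ y' ∈ S, y' ≠ y ∧ ¬ G.Adj y y')).card := by
  have hmain : (S.filter (fun y => ∀ y' ∈ S.erase y, G.Adj y y')).card ≤ 1 := by
    rw [Finset.card_le_one]
    intro y1 h1 y2 h2
    by_contra hne
    obtain ⟨hy1S, hdom1⟩ := Finset.mem_filter.mp h1
    obtain ⟨hy2S, hdom2⟩ := Finset.mem_filter.mp h2
    have hT : 2 < ((S.erase y1).erase y2).card := by
      have h1 : S.card - 1 ≤ (S.erase y1).card := by
        rw [Finset.card_erase_of_mem hy1S]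
      have h2 : (S.erase y1).card - 1 ≤ ((S.erase y1).erase y2).card := by
        rw [Finset.card_erase_of_mem (Finset.mem_erase.mpr ⟨fun h => hne h.symm, hy2S⟩)]
      omega
    obtain ⟨a, b, c, ha, hb, hc, hab, hac, hbc⟩ := Finset.two_lt_card_iff.mp hT
    obtain ⟨haz2, haz1, haS⟩ : a ≠ y2 ∧ a ≠ y1 ∧ a ∈ S := by
      simpa [Finset.mem_erase, and_assoc] using ha
    obtain ⟨hbz2, hbz1, hbS⟩ : b ≠ y2 ∧ b ≠ y1 ∧ b ∈ S := by
      simpa [Finset.mem_erase, and_assoc] using hb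
    obtain ⟨hcz2, hcz1, hcS⟩ : c ≠ y2 ∧ c ≠ y1 ∧ c ∈ S := by
      simpa [Finset.mem_erase, and_assoc] using hc
    -- adjacency facts
    have hza := hS a haS
    have hzb := hS b hbS
    have hzc := hS c hcS
    have hzy1 := hS y1 hy1S
    have hzy2 := hS y2 hy2S
    have hy1a := hdom1 a (Finset.mem_erase.mpr ⟨haz1, haS⟩)
    have hy1b := hdom1 b (Finset.mem_erase.mpr ⟨hbz1, hbS⟩)
    have hy1c := hdom1 c (Finset.mem_erase.mpr ⟨hcz1, hcS⟩)
    have hy2a := hdom2 a (Finset.mem_erase.mpr ⟨haz2, haS⟩)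
    have hy2b := hdom2 b (Finset.mem_erase.mpr ⟨hbz2, hbS⟩)
    have hy2c := hdom2 c (Finset.mem_erase.mpr ⟨hcz2, hcS⟩)
    apply hG
    refine ⟨Sum.elim ![z, y1, y2] ![a, b, c], ?_, ?_⟩
    · exact elim_inj z y1 y2 a b c hzy1.ne hzy2.ne hne hab hac hbc
        hza.ne hzb.ne hzc.ne (Ne.symm haz1) (Ne.symm hbz1) (Ne.symm hcz1)
        (Ne.symm haz2) (Ne.symm hbz2) (Ne.symm hcz2)
    · intro x y hxy
      rcases x with x | x <;> rcases y with y | y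
      · simp at hxy
      · fin_cases x <;> fin_cases y <;>
          simp only [Sum.elim_inl, Sum.elim_inr, Matrix.cons_val_zero, Matrix.cons_val_one,
            Matrix.head_cons, Matrix.cons_val_two, Matrix.tail_cons] <;>
          assumption
      · fin_cases x <;> fin_cases y <;>
          simp only [Sum.elim_inl, Sum.elim_inr, Matrix.cons_val_zero, Matrix.cons_val_one,
            Matrix.head_cons, Matrix.cons_val_two, Matrix.tail_cons] <;>
          first
          | exact hza.symm | exact hzb.symm | exact hzc.symm
          | exact hy1a.symm | exact hy1b.symm | exact hy1c.symm
          | exact hy2a.symm | exact hy2b.symm | exact hy2c.symm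
      · simp at hxy
  refine ⟨hmain, ?_⟩
  have heq : S.filter (fun y => ∃ y' ∈ S, y' ≠ y ∧ ¬ G.Adj y y') =
      S \ S.filter (fun y => ∀ y' ∈ S.erase y, G.Adj y y') := by
    ext y
    simp only [Finset.mem_filter, Finset.mem_sdiff, Finset.mem_erase, not_forall]
    constructor
    · rintro ⟨hyS, y', hy'S, hne, hnadj⟩
      exact ⟨hyS, fun h => (h.2 y' ⟨hne, hy'S⟩ |> hnadj)⟩
    · rintro ⟨hyS, h⟩
      refine ⟨hyS, ?_⟩
      by_contra hcon
      push_neg at hcon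
      exact h ⟨hyS, fun y' hy' => hcon y' hy'.2 hy'.1⟩
  rw [heq, Finset.card_sdiff_of_subset (Finset.filter_subset _ _)]
  omega
end

section
/- Under the Setup with standing assumption (†): (i) every vertex y ∈ B ∪ {p} satisfies |L(y) ∩ Λ| ≥ r − b = a; (ii) no vertex y ∈ B is movable to the class of any accessible color; (iii) a ≤ d(p). -/
open Finset

namespace EqListColoring

open scoped Classical

/-- `n mod* r` : the unique `i ∈ {1, …, r}` with `r ∣ n - i` (for `n, r ≥ 1`). -/
def modStar (n r : ℕ) : ℕ := if n % r = 0 then r else n % r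

variable {V : Type*}

/-- `s = ⌈|V(G')|/r⌉ = ⌈(|V| - 1)/r⌉`, the maximum allowed class size. -/
noncomputable def sVal (V : Type*) [Fintype V] (r : ℕ) : ℕ :=
  ⌈((Fintype.card V - 1 : ℕ) : ℚ) / r⌉₊

/-- The class `γ̃ = f⁻¹(γ)` of color `γ` in the coloring `f` of `G' = G - p`. -/
noncomputable def classOf [Fintype V] [DecidableEq V] (p : V) (f : V → ℕ) (γ : ℕ) : Finset V :=
  (Finset.univ.erase p).filter (fun v => f v = γ)

/-- `Γ`, the union of all lists. -/
noncomputable def colorSet [Fintype V] (L : V → Finset ℕ) : Finset ℕ :=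
  Finset.univ.biUnion L

/-- `x` is movable to the class `γ̃`: `γ ∈ L(x)` and `x` has no neighbor in `γ̃`. -/
def MovableTo [Fintype V] [DecidableEq V] (G : SimpleGraph V) (L : V → Finset ℕ)
    (p : V) (f : V → ℕ) (x : V) (γ : ℕ) : Prop :=
  γ ∈ L x ∧ ∀ y ∈ classOf p f γ, ¬ G.Adj x y

/-- The arcs of the auxiliary digraph `H` on the colors: `α → β` iff `α ≠ β` and
some vertex of the class `α̃` is movable to `β̃`. -/
def Arc [Fintype V] [DecidableEq V] (G : SimpleGraph V) (L : V → Finset ℕ)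
    (p : V) (f : V → ℕ) (α β : ℕ) : Prop :=
  α ≠ β ∧ ∃ x ∈ classOf p f α, MovableTo G L p f x β

/-- A color `γ ∈ Γ` is accessible if `H` has a (possibly trivial) directed path
from `γ` to a color of `Γ` whose class is light. -/
def Accessible [Fintype V] [DecidableEq V] (G : SimpleGraph V) (L : V → Finset ℕ)
    (p : V) (f : V → ℕ) (s γ : ℕ) : Prop :=
  γ ∈ colorSet L ∧ ∃ δ ∈ colorSet L,
    Relation.ReflTransGen (Arc G L p f) γ δ ∧ (classOf p f δ).card < s

/-- `Λ`, the set of accessible colors. -/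
noncomputable def lamSet [Fintype V] [DecidableEq V] (G : SimpleGraph V) (L : V → Finset ℕ)
    (p : V) (f : V → ℕ) (s : ℕ) : Finset ℕ :=
  (colorSet L).filter (Accessible G L p f s)

/-- `Φ = Γ ∖ Λ`, the set of inaccessible colors. -/
noncomputable def phiSet [Fintype V] [DecidableEq V] (G : SimpleGraph V) (L : V → Finset ℕ)
    (p : V) (f : V → ℕ) (s : ℕ) : Finset ℕ :=
  colorSet L \ lamSet G L p f s

/-- `A = ⋃_{λ ∈ Λ} λ̃`. -/
noncomputable def aSet [Fintype V] [DecidableEq V] (G : SimpleGraph V) (L : V → Finset ℕ)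
    (p : V) (f : V → ℕ) (s : ℕ) : Finset V :=
  (lamSet G L p f s).biUnion (classOf p f)

/-- `B = ⋃_{φ ∈ Φ} φ̃`. -/
noncomputable def bSet [Fintype V] [DecidableEq V] (G : SimpleGraph V) (L : V → Finset ℕ)
    (p : V) (f : V → ℕ) (s : ℕ) : Finset V :=
  (phiSet G L p f s).biUnion (classOf p f)

/-- `f` is a strongly equitable (SE) `L`-coloring of `G' = G - p`:
a proper coloring of `G - p` from the lists in which every class has size at most
`s = ⌈(|V|-1)/r⌉` and at most `(|V|-1) mod* r` classes have size exactly `s`. -/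
def IsSE [Fintype V] [DecidableEq V] (G : SimpleGraph V) (r : ℕ) (L : V → Finset ℕ)
    (p : V) (f : V → ℕ) : Prop :=
  (∀ v, v ≠ p → f v ∈ L v) ∧
  (∀ u v, u ≠ p → v ≠ p → G.Adj u v → f u ≠ f v) ∧
  (∀ γ : ℕ, (classOf p f γ).card ≤ sVal V r) ∧
  ((colorSet L).filter (fun γ => (classOf p f γ).card = sVal V r)).card
    ≤ modStar (Fintype.card V - 1) r

/-- The set-up of the proof of the main theorem: `r ≥ 9`, `G` is a graph in class ℬ
on at least two vertices with `Δ(G) ≤ r`, `L` is an `r`-list assignment for `G`,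
`p` is a vertex of minimum degree, `f` is an SE `L`-coloring of `G' = G - p`, and
(†) `p` is not movable to the class of any accessible color. -/
structure Setup (V : Type*) [Fintype V] [DecidableEq V] where
  G : SimpleGraph V
  r : ℕ
  L : V → Finset ℕ
  p : V
  f : V → ℕ
  hr : 9 ≤ r
  hB : ∀ X Y : Finset V, Disjoint X Y → 3 ≤ (X ∪ Y).card →
      ((X ×ˢ Y).filter (fun e => G.Adj e.1 e.2)).card ≤ 2 * (X ∪ Y).card - 4
  hΔ : ∀ v, (Finset.univ.filter (fun u => G.Adj v u)).card ≤ r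
  hV : 2 ≤ Fintype.card V
  hL : ∀ v, (L v).card = r
  hpmin : ∀ v, (Finset.univ.filter (fun u => G.Adj p u)).card
      ≤ (Finset.univ.filter (fun u => G.Adj v u)).card
  hSE : IsSE G r L p f
  hdagger : ∀ γ : ℕ, Accessible G L p f (sVal V r) γ → ¬ MovableTo G L p f p γ

namespace Setup

variable [Fintype V] [DecidableEq V] (S : Setup V)

/-- The maximum allowed class size `s`. -/
noncomputable def s : ℕ := sVal V S.r

/-- The class `γ̃` of a color `γ`. -/
noncomputable def cls (γ : ℕ) : Finset V := classOf S.p S.f γ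

/-- The color set `Γ`. -/
noncomputable def Γ : Finset ℕ := colorSet S.L

/-- The set `Λ` of accessible colors. -/
noncomputable def Λ : Finset ℕ := lamSet S.G S.L S.p S.f S.s

/-- The set `Φ = Γ ∖ Λ` of inaccessible colors. -/
noncomputable def Φ : Finset ℕ := phiSet S.G S.L S.p S.f S.s

/-- `b = |Φ|`. -/
noncomputable def b : ℕ := S.Φ.card

/-- `a = r - b`. -/
noncomputable def 𝒶 : ℕ := S.r - S.b

/-- `A = ⋃_{λ ∈ Λ} λ̃`. -/
noncomputable def A : Finset V := aSet S.G S.L S.p S.f S.s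

/-- `B = ⋃_{φ ∈ Φ} φ̃`. -/
noncomputable def B : Finset V := bSet S.G S.L S.p S.f S.s

/-- `‖z, X‖`, the number of neighbors of `z` in `X`. -/
noncomputable def nbr (z : V) (X : Finset V) : ℕ := (X.filter (fun y => S.G.Adj z y)).card

/-- `y` is a solo neighbor of `z`: `y` is adjacent to `z`, `f(z) ∈ L(y)` and `z` is
the unique neighbor of `y` in the class of `f(z)`. -/
def SoloNbr (z y : V) : Prop :=
  S.G.Adj z y ∧ S.f z ∈ S.L y ∧ ∀ w ∈ S.cls (S.f z), S.G.Adj y w → w = z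

/-- `S_z`, the set of solo neighbors `y ∈ B` of `z`. -/
noncomputable def soloSet (z : V) : Finset V := S.B.filter (fun y => S.SoloNbr z y)

/-- `z ∈ A` is a solo vertex: `S_z ≠ ∅` and if some class of an accessible color is
full then that class is the class of `z`. -/
def SoloVertex (z : V) : Prop :=
  z ∈ S.A ∧ (S.soloSet z).Nonempty ∧ ∀ γ ∈ S.Λ, (S.cls γ).card = S.s → γ = S.f z

/-- A solo neighbor `y ∈ S_z` is useful if it is nonadjacent to some other solo
neighbor of `z`. -/
def Useful (z y : V) : Prop := ∃ y' ∈ S.soloSet z, y' ≠ y ∧ ¬ S.G.Adj y y'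

/-- `S_z*`, the set of useful solo neighbors of `z`. -/
noncomputable def soloStar (z : V) : Finset V := (S.soloSet z).filter (S.Useful z)

/-- (O1) : among all SE `L`-colorings of `G' = G - p`, `f` maximizes `|A|`. -/
def O1 : Prop :=
  ∀ f' : V → ℕ, IsSE S.G S.r S.L S.p f' →
    (aSet S.G S.L S.p f' S.s).card ≤ S.A.card

/-- (O2) : subject to (O1), `f` maximizes the number of accessible colors with
nonempty classes. -/
def O2 : Prop :=
  ∀ f' : V → ℕ, IsSE S.G S.r S.L S.p f' →
    (aSet S.G S.L S.p f' S.s).card = S.A.card →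
    ((lamSet S.G S.L S.p f' S.s).filter (fun γ => (classOf S.p f' γ).Nonempty)).card
      ≤ (S.Λ.filter (fun γ => (S.cls γ).Nonempty)).card

end Setup

lemma card_sub_card_sdiff_le_card_inter {α : Type*} [DecidableEq α] {s t u : Finset α}
    (h : s ⊆ u) : s.card - (u \ t).card ≤ (s ∩ t).card := by
  have hsub : s \ t ⊆ u \ t := sdiff_subset_sdiff h le_rfl
  have := card_sdiff_add_card_inter s t
  have := card_le_card hsub
  omega

section Accessibility

variable [Fintype V] [DecidableEq V] {G : SimpleGraph V} {L : V → Finset ℕ} {p : V}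
  {f : V → ℕ} {s : ℕ}

lemma Accessible.of_arc {α β : ℕ} (hα : α ∈ colorSet L) (hαβ : Arc G L p f α β)
    (hβ : Accessible G L p f s β) : Accessible G L p f s α := by
  obtain ⟨-, δ, hδ, hpath, hlight⟩ := hβ
  exact ⟨hα, δ, hδ, .head hαβ hpath, hlight⟩

lemma not_movableTo_of_mem_bSet {y : V} (hy : y ∈ bSet G L p f s) {γ : ℕ}
    (hγ : Accessible G L p f s γ) : ¬ MovableTo G L p f y γ := by
  intro hmov
  obtain ⟨φ, hφ, hyφ⟩ := mem_biUnion.1 hy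
  obtain ⟨hφΓ, hφΛ⟩ := mem_sdiff.1 hφ
  have hφγ : φ ≠ γ := by
    rintro rfl
    exact hφΛ (mem_filter.2 ⟨hφΓ, hγ⟩)
  exact hφΛ (mem_filter.2 ⟨hφΓ, hγ.of_arc hφΓ ⟨hφγ, y, hyφ, hmov⟩⟩)

end Accessibility

namespace Setup

variable [Fintype V] [DecidableEq V] (S : Setup V)

lemma a_le_card_inter_Λ (y : V) : S.𝒶 ≤ (S.L y ∩ S.Λ).card := by
  have hLΓ : S.L y ⊆ S.Γ := subset_biUnion_of_mem S.L (mem_univ y)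
  have h := card_sub_card_sdiff_le_card_inter (t := S.Λ) hLΓ
  rwa [S.hL y] at h

/-- (†): every accessible color of `L(p)` is blocked by a neighbor of `p` in its class. -/
lemma inter_Λ_subset_image_neighbors :
    S.L S.p ∩ S.Λ ⊆ (univ.filter (fun u => S.G.Adj S.p u)).image S.f := by
  intro γ hγ
  obtain ⟨hγL, hγΛ⟩ := mem_inter.1 hγ
  have hblocked := S.hdagger γ (mem_filter.1 hγΛ).2
  simp only [MovableTo, hγL, true_and, not_forall, not_not] at hblocked
  obtain ⟨y, hy, hpy⟩ := hblocked
  exact mem_image.2 ⟨y, mem_filter.2 ⟨mem_univ y, hpy⟩, (mem_filter.1 hy).2⟩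

lemma a_le_degree_p : S.𝒶 ≤ (univ.filter (fun u => S.G.Adj S.p u)).card :=
  calc S.𝒶 ≤ (S.L S.p ∩ S.Λ).card := S.a_le_card_inter_Λ S.p
    _ ≤ ((univ.filter (fun u => S.G.Adj S.p u)).image S.f).card :=
      card_le_card S.inter_Λ_subset_image_neighbors
    _ ≤ (univ.filter (fun u => S.G.Adj S.p u)).card := card_image_le

end Setup

/-- Lemma 1 (under the Setup and (†)):
(i) every `y ∈ B ∪ {p}` satisfies `|L(y) ∩ Λ| ≥ r - b = a`;
(ii) no vertex of `B` is movable to the class of any accessible color;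
(iii) `a ≤ d(p)`. -/
theorem lemma_pr1 {V : Type*} [Fintype V] [DecidableEq V] (S : Setup V) :
    (∀ y ∈ insert S.p S.B, S.𝒶 ≤ (S.L y ∩ S.Λ).card) ∧
    (∀ y ∈ S.B, ∀ γ : ℕ, Accessible S.G S.L S.p S.f S.s γ →
      ¬ MovableTo S.G S.L S.p S.f y γ) ∧
    S.𝒶 ≤ (Finset.univ.filter (fun u => S.G.Adj S.p u)).card :=
  ⟨fun y _ => S.a_le_card_inter_Λ y, fun _ hy _ hγ => not_movableTo_of_mem_bSet hy hγ,
    S.a_le_degree_p⟩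

end EqListColoring
end

section
/- Under the Setup with standing assumption (†) and optimality assumptions (O1)–(O2): if z is a solo vertex, y ∈ S_z* is a useful solo neighbor of z, and f(y) ∈ L(z), then z has at least two neighbors in the class f⁻¹(f(y)). -/
open Finset

namespace EqListColoring

open scoped Classical

variable {V : Type*}

section AuxLemmas

variable {V : Type*} [Fintype V] [DecidableEq V]

lemma mem_classOf {p : V} {f : V → ℕ} {γ : ℕ} {v : V} :
    v ∈ classOf p f γ ↔ v ≠ p ∧ f v = γ := by
  simp [classOf]

lemma mem_colorSet_of {L : V → Finset ℕ} {γ : ℕ} {v : V} (h : γ ∈ L v) :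
    γ ∈ colorSet L := Finset.mem_biUnion.mpr ⟨v, Finset.mem_univ v, h⟩

lemma mem_aSet {G : SimpleGraph V} {L : V → Finset ℕ} {p : V} {f : V → ℕ} {s : ℕ} {v : V} :
    v ∈ aSet G L p f s ↔ v ≠ p ∧ f v ∈ lamSet G L p f s := by
  constructor
  · intro h
    obtain ⟨γ, hγ, hv⟩ := Finset.mem_biUnion.mp h
    obtain ⟨h1, h2⟩ := mem_classOf.mp hv
    exact ⟨h1, h2 ▸ hγ⟩
  · rintro ⟨h1, h2⟩
    exact Finset.mem_biUnion.mpr ⟨f v, h2, mem_classOf.mpr ⟨h1, rfl⟩⟩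

lemma mem_bSet {G : SimpleGraph V} {L : V → Finset ℕ} {p : V} {f : V → ℕ} {s : ℕ} {v : V} :
    v ∈ bSet G L p f s ↔ v ≠ p ∧ f v ∈ phiSet G L p f s := by
  constructor
  · intro h
    obtain ⟨γ, hγ, hv⟩ := Finset.mem_biUnion.mp h
    obtain ⟨h1, h2⟩ := mem_classOf.mp hv
    exact ⟨h1, h2 ▸ hγ⟩
  · rintro ⟨h1, h2⟩
    exact Finset.mem_biUnion.mpr ⟨f v, h2, mem_classOf.mpr ⟨h1, rfl⟩⟩

end AuxLemmas

/-- Lemma 6 (under the Setup, (†), (O1) and (O2)): if `z` is a solo vertex,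
`y ∈ S_z*` is a useful solo neighbor of `z` and `f(y) ∈ L(z)`, then `z` has at
least two neighbors in the class `f⁻¹(f(y))`. -/
theorem lemma_useful {V : Type*} [Fintype V] [DecidableEq V] (S : Setup V)
    (hO1 : S.O1) (hO2 : S.O2) (z y : V) (hz : S.SoloVertex z)
    (hy : y ∈ S.soloStar z) (hfy : S.f y ∈ S.L z) :
    2 ≤ S.nbr z (S.cls (S.f y)) := by
  classical
  obtain ⟨hLf, hProper, hSize, hFullCt⟩ := S.hSE
  obtain ⟨hzA, -, hsoloV⟩ := hz
  have hsdef : S.s = sVal V S.r := rfl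
  by_contra hgoal
  push_neg at hgoal
  have hcard1 : ((classOf S.p S.f (S.f y)).filter (fun w => S.G.Adj z w)).card ≤ 1 := by
    have h2 : S.nbr z (S.cls (S.f y)) < 2 := hgoal
    simp only [Setup.nbr, Setup.cls] at h2
    omega
  -- unpack y
  have hy2 : y ∈ S.soloSet z ∧ S.Useful z y := by
    simpa [Setup.soloStar, Finset.mem_filter] using hy
  obtain ⟨hySolo, hyUse⟩ := hy2
  have hy3 : y ∈ S.B ∧ S.SoloNbr z y := by
    simpa [Setup.soloSet, Finset.mem_filter] using hySolo
  obtain ⟨hyB, hSN⟩ := hy3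
  obtain ⟨hyadj, hfzLy, hyuniq0⟩ := hSN
  have hyuniq : ∀ w ∈ classOf S.p S.f (S.f z), S.G.Adj y w → w = z := hyuniq0
  obtain ⟨hyp, hfyΦ⟩ := mem_bSet.mp hyB
  have hfyΓ : S.f y ∈ colorSet S.L := (Finset.mem_sdiff.mp hfyΦ).1
  have hfyNΛ : S.f y ∉ lamSet S.G S.L S.p S.f S.s := (Finset.mem_sdiff.mp hfyΦ).2
  -- unpack z
  have hzA' : z ∈ aSet S.G S.L S.p S.f S.s := hzA
  obtain ⟨hzp, hfzΛ⟩ := mem_aSet.mp hzA'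
  have hfzΓ : S.f z ∈ colorSet S.L := (Finset.mem_filter.mp hfzΛ).1
  -- unpack y'
  obtain ⟨y', hy'Solo, hy'ney, hy'nadj⟩ := hyUse
  have hy'3 : y' ∈ S.B ∧ S.SoloNbr z y' := by
    simpa [Setup.soloSet, Finset.mem_filter] using hy'Solo
  obtain ⟨hy'B, hSN'⟩ := hy'3
  obtain ⟨hy'adj, hfzLy', hy'uniq0⟩ := hSN'
  have hy'uniq : ∀ w ∈ classOf S.p S.f (S.f z), S.G.Adj y' w → w = z := hy'uniq0
  obtain ⟨hy'p, hfy'Φ⟩ := mem_bSet.mp hy'B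
  have hfy'Γ : S.f y' ∈ colorSet S.L := (Finset.mem_sdiff.mp hfy'Φ).1
  have hfy'NΛ : S.f y' ∉ lamSet S.G S.L S.p S.f S.s := (Finset.mem_sdiff.mp hfy'Φ).2
  -- basic ne facts
  have hfyfz : S.f y ≠ S.f z := fun h => hfyNΛ (h ▸ hfzΛ)
  have hfy'fz : S.f y' ≠ S.f z := fun h => hfy'NΛ (h ▸ hfzΛ)
  have hzy : z ≠ y := hyadj.ne
  have hzy' : z ≠ y' := hy'adj.ne
  -- uniqueness of z's neighbor in the class of f y
  have hymem : y ∈ (classOf S.p S.f (S.f y)).filter (fun w => S.G.Adj z w) :=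
    Finset.mem_filter.mpr ⟨mem_classOf.mpr ⟨hyp, rfl⟩, hyadj⟩
  have huniqfy : ∀ w, w ≠ S.p → S.f w = S.f y → S.G.Adj z w → w = y := by
    intro w h1 h2 h3
    exact Finset.card_le_one.mp hcard1 w
      (Finset.mem_filter.mpr ⟨mem_classOf.mpr ⟨h1, h2⟩, h3⟩) y hymem
  -- every accessible class other than z's is light
  have hlight : ∀ γ ∈ lamSet S.G S.L S.p S.f S.s, γ ≠ S.f z →
      (classOf S.p S.f γ).card < S.s := by
    intro γ hγ hne
    have h1 : (classOf S.p S.f γ).card ≤ S.s := hSize γ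
    have h2 : (classOf S.p S.f γ).card ≠ S.s := fun h => hne (hsoloV γ hγ h)
    exact lt_of_le_of_ne h1 h2
  -- light colors are accessible
  have htriv : ∀ (g : V → ℕ) (γ : ℕ), γ ∈ colorSet S.L → (classOf S.p g γ).card < S.s →
      γ ∈ lamSet S.G S.L S.p g S.s := by
    intro g γ h1 h2
    exact Finset.mem_filter.mpr ⟨h1, h1, γ, h1, Relation.ReflTransGen.refl, h2⟩
  have hzcls : z ∈ classOf S.p S.f (S.f z) := mem_classOf.mpr ⟨hzp, rfl⟩
  have hycls : y ∈ classOf S.p S.f (S.f y) := mem_classOf.mpr ⟨hyp, rfl⟩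
  have hynfz : y ∉ classOf S.p S.f (S.f z) := fun h => hfyfz (mem_classOf.mp h).2
  have hznfy : z ∉ classOf S.p S.f (S.f y) := fun h => hfyfz ((mem_classOf.mp h).2).symm
  have hone : 1 ≤ (classOf S.p S.f (S.f z)).card := Finset.card_pos.mpr ⟨z, hzcls⟩
  have honey : 1 ≤ (classOf S.p S.f (S.f y)).card := Finset.card_pos.mpr ⟨y, hycls⟩
  -- the swap coloring
  set f' : V → ℕ := fun v => if v = z then S.f y else if v = y then S.f z else S.f v
    with hf'def
  have hf'z : f' z = S.f y := by simp [hf'def]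
  have hf'y : f' y = S.f z := by simp [hf'def, Ne.symm hzy]
  have hf'o : ∀ v, v ≠ z → v ≠ y → f' v = S.f v := by
    intro v h1 h2; simp [hf'def, h1, h2]
  have hcls'fz : classOf S.p f' (S.f z) = insert y ((classOf S.p S.f (S.f z)).erase z) := by
    ext v
    simp only [mem_classOf, Finset.mem_insert, Finset.mem_erase]
    rcases eq_or_ne v z with rfl | hvz
    · simp [hf'z, hfyfz, hzy]
    · rcases eq_or_ne v y with rfl | hvy
      · simp [hf'y, hyp]
      · rw [hf'o v hvz hvy]; simp [hvy, hvz]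
  have hcls'fy : classOf S.p f' (S.f y) = insert z ((classOf S.p S.f (S.f y)).erase y) := by
    ext v
    simp only [mem_classOf, Finset.mem_insert, Finset.mem_erase]
    rcases eq_or_ne v z with rfl | hvz
    · simp [hf'z, hzp]
    · rcases eq_or_ne v y with rfl | hvy
      · simp [hf'y, Ne.symm hfyfz, Ne.symm hzy]
      · rw [hf'o v hvz hvy]; simp [hvy, hvz]
  have hcls'other : ∀ γ, γ ≠ S.f z → γ ≠ S.f y → classOf S.p f' γ = classOf S.p S.f γ := by
    intro γ h1 h2
    ext v
    simp only [mem_classOf]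
    rcases eq_or_ne v z with rfl | hvz
    · simp [hf'z, Ne.symm h2, Ne.symm h1]
    · rcases eq_or_ne v y with rfl | hvy
      · simp [hf'y, Ne.symm h1, Ne.symm h2]
      · rw [hf'o v hvz hvy]
  have hcard' : ∀ γ, (classOf S.p f' γ).card = (classOf S.p S.f γ).card := by
    intro γ
    rcases eq_or_ne γ (S.f z) with rfl | h1
    · rw [hcls'fz, Finset.card_insert_of_notMem (fun h => hynfz (Finset.mem_of_mem_erase h)),
        Finset.card_erase_of_mem hzcls]
      omega
    · rcases eq_or_ne γ (S.f y) with rfl | h2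
      · rw [hcls'fy, Finset.card_insert_of_notMem (fun h => hznfy (Finset.mem_of_mem_erase h)),
          Finset.card_erase_of_mem hycls]
        omega
      · rw [hcls'other γ h1 h2]
  have hSE' : IsSE S.G S.r S.L S.p f' := by
    refine ⟨?_, ?_, ?_, ?_⟩
    · intro v hvp
      rcases eq_or_ne v z with rfl | h1
      · rw [hf'z]; exact hfy
      · rcases eq_or_ne v y with rfl | h2
        · rw [hf'y]; exact hfzLy
        · rw [hf'o v h1 h2]; exact hLf v hvp
    · intro u v hup hvp hadj
      by_cases huz : u = z
      · by_cases hvy : v = y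
        · rw [huz, hvy, hf'z, hf'y]; exact hfyfz
        · have hvz : v ≠ z := fun h => S.G.irrefl (h ▸ huz ▸ hadj)
          rw [huz, hf'z, hf'o v hvz hvy]
          intro h
          exact hvy (huniqfy v hvp h.symm (huz ▸ hadj))
      · by_cases huy : u = y
        · by_cases hvz : v = z
          · rw [huy, hvz, hf'y, hf'z]; exact fun h => hfyfz h.symm
          · have hvy : v ≠ y := fun h => S.G.irrefl (h ▸ huy ▸ hadj)
            rw [huy, hf'y, hf'o v hvz hvy]
            intro h
            exact hvz (hyuniq v (mem_classOf.mpr ⟨hvp, h.symm⟩) (huy ▸ hadj))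
        · rw [hf'o u huz huy]
          by_cases hvz : v = z
          · rw [hvz, hf'z]
            intro h
            exact huy (huniqfy u hup h (hvz ▸ hadj).symm)
          · by_cases hvy : v = y
            · rw [hvy, hf'y]
              intro h
              exact huz (hyuniq u (mem_classOf.mpr ⟨hup, h⟩) (hvy ▸ hadj).symm)
            · rw [hf'o v hvz hvy]
              exact hProper u v hup hvp hadj
    · intro γ; rw [hcard']; exact hSize γ
    · have heq : (colorSet S.L).filter (fun γ => (classOf S.p f' γ).card = sVal V S.r)
          = (colorSet S.L).filter (fun γ => (classOf S.p S.f γ).card = sVal V S.r) :=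
        Finset.filter_congr (fun γ _ => by rw [hcard'])
      rw [heq]; exact hFullCt
  -- the main swap contradiction, given accessibility of f z under f'
  have main : ∀ δ, δ ∈ colorSet S.L → Relation.ReflTransGen (Arc S.G S.L S.p f') (S.f z) δ →
      (classOf S.p f' δ).card < S.s → False := by
    intro δ hδΓ hpath hδlt
    have hfzΛ' : S.f z ∈ lamSet S.G S.L S.p f' S.s :=
      Finset.mem_filter.mpr ⟨hfzΓ, hfzΓ, δ, hδΓ, hpath, hδlt⟩
    have hΛsub : ∀ γ ∈ lamSet S.G S.L S.p S.f S.s, γ ∈ lamSet S.G S.L S.p f' S.s := by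
      intro γ hγ
      rcases eq_or_ne γ (S.f z) with rfl | hne
      · exact hfzΛ'
      · have hγy : γ ≠ S.f y := fun h => hfyNΛ (h ▸ hγ)
        refine htriv f' γ (Finset.mem_filter.mp hγ).1 ?_
        rw [hcls'other γ hne hγy]
        exact hlight γ hγ hne
    have harc : Arc S.G S.L S.p f' (S.f y') (S.f z) := by
      refine ⟨hfy'fz, y', mem_classOf.mpr ⟨hy'p, hf'o y' (Ne.symm hzy') hy'ney⟩, hfzLy', ?_⟩
      intro w hw
      rw [hcls'fz] at hw
      rcases Finset.mem_insert.mp hw with rfl | hw2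
      · intro hadj2; exact hy'nadj hadj2.symm
      · intro hadj2
        exact (Finset.mem_erase.mp hw2).1 (hy'uniq w (Finset.mem_of_mem_erase hw2) hadj2)
    have hφΛ' : S.f y' ∈ lamSet S.G S.L S.p f' S.s :=
      Finset.mem_filter.mpr ⟨hfy'Γ, hfy'Γ, δ, hδΓ, Relation.ReflTransGen.head harc hpath, hδlt⟩
    have hyNA : y ∉ aSet S.G S.L S.p S.f S.s := fun h => hfyNΛ (mem_aSet.mp h).2
    have hy'NA : y' ∉ aSet S.G S.L S.p S.f S.s := fun h => hfy'NΛ (mem_aSet.mp h).2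
    have hsub : insert y (insert y' ((aSet S.G S.L S.p S.f S.s).erase z))
        ⊆ aSet S.G S.L S.p f' S.s := by
      intro v hv
      rcases Finset.mem_insert.mp hv with rfl | hv1
      · exact mem_aSet.mpr ⟨hyp, by rw [hf'y]; exact hfzΛ'⟩
      rcases Finset.mem_insert.mp hv1 with rfl | hv2
      · exact mem_aSet.mpr ⟨hy'p, by rw [hf'o v (Ne.symm hzy') hy'ney]; exact hφΛ'⟩
      · have hvz : v ≠ z := (Finset.mem_erase.mp hv2).1
        have hvA := Finset.mem_of_mem_erase hv2
        obtain ⟨hvp, hvΛ⟩ := mem_aSet.mp hvA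
        have hvy : v ≠ y := fun h => hyNA (h ▸ hvA)
        exact mem_aSet.mpr ⟨hvp, by rw [hf'o v hvz hvy]; exact hΛsub _ hvΛ⟩
    have hc1 : ((aSet S.G S.L S.p S.f S.s).erase z).card
        = (aSet S.G S.L S.p S.f S.s).card - 1 := Finset.card_erase_of_mem hzA'
    have hy'nmem : y' ∉ (aSet S.G S.L S.p S.f S.s).erase z :=
      fun h => hy'NA (Finset.mem_of_mem_erase h)
    have hynmem : y ∉ insert y' ((aSet S.G S.L S.p S.f S.s).erase z) := by
      intro h
      rcases Finset.mem_insert.mp h with h | h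
      · exact hy'ney h.symm
      · exact hyNA (Finset.mem_of_mem_erase h)
    have hcards := Finset.card_le_card hsub
    rw [Finset.card_insert_of_notMem hynmem, Finset.card_insert_of_notMem hy'nmem, hc1]
      at hcards
    have hO1' : (aSet S.G S.L S.p f' S.s).card ≤ (aSet S.G S.L S.p S.f S.s).card := hO1 f' hSE'
    have hApos : 1 ≤ (aSet S.G S.L S.p S.f S.s).card := Finset.card_pos.mpr ⟨z, hzA'⟩
    omega
  -- case split on whether z's class is light or full
  rcases lt_or_eq_of_le (hSize (S.f z)) with hlt | hfull
  · exact main (S.f z) hfzΓ Relation.ReflTransGen.refl (by rw [hcard']; exact hlt)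
  · obtain ⟨-, δ₀, hδ₀Γ, hpath0, hδ₀lt⟩ := (Finset.mem_filter.mp hfzΛ).2
    rcases Relation.ReflTransGen.cases_head hpath0 with heq | ⟨γ₁, harc1, htail⟩
    · rw [← heq] at hδ₀lt
      have hco : (classOf S.p S.f (S.f z)).card = S.s := by rw [hsdef]; exact hfull
      omega
    · obtain ⟨hne1, x, hxmem, hxL, hxmov⟩ := harc1
      have hγ₁Γ : γ₁ ∈ colorSet S.L := mem_colorSet_of hxL
      have hγ₁Λ : γ₁ ∈ lamSet S.G S.L S.p S.f S.s :=
        Finset.mem_filter.mpr ⟨hγ₁Γ, hγ₁Γ, δ₀, hδ₀Γ, htail, hδ₀lt⟩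
      have hγ₁fz : γ₁ ≠ S.f z := Ne.symm hne1
      have hγ₁lt : (classOf S.p S.f γ₁).card < S.s := hlight γ₁ hγ₁Λ hγ₁fz
      have hγ₁fy : γ₁ ≠ S.f y := fun h => hfyNΛ (h ▸ hγ₁Λ)
      by_cases hxz : x = z
      · -- z itself is movable to the light class γ₁ : move z there and y into z's class
        subst hxz
        set f₄ : V → ℕ := fun v => if v = x then γ₁ else S.f v with hf4def
        have hf4z : f₄ x = γ₁ := by simp [hf4def]
        have hf4o : ∀ v, v ≠ x → f₄ v = S.f v := by
          intro v h; simp [hf4def, h]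
        have hcls4fz : classOf S.p f₄ (S.f x) = (classOf S.p S.f (S.f x)).erase x := by
          ext v
          simp only [mem_classOf, Finset.mem_erase]
          rcases eq_or_ne v x with rfl | hvz
          · simp [hf4z, hγ₁fz]
          · rw [hf4o v hvz]; simp [hvz]
        have hznγ₁ : x ∉ classOf S.p S.f γ₁ := fun h => hγ₁fz ((mem_classOf.mp h).2).symm
        have hcls4γ₁ : classOf S.p f₄ γ₁ = insert x (classOf S.p S.f γ₁) := by
          ext v
          simp only [mem_classOf, Finset.mem_insert]
          rcases eq_or_ne v x with rfl | hvz
          · simp [hf4z, hzp]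
          · rw [hf4o v hvz]; simp [hvz]
        have hcls4o : ∀ γ, γ ≠ S.f x → γ ≠ γ₁ → classOf S.p f₄ γ = classOf S.p S.f γ := by
          intro γ h1 h2
          ext v
          simp only [mem_classOf]
          rcases eq_or_ne v x with rfl | hvz
          · simp [hf4z, Ne.symm h2, Ne.symm h1]
          · rw [hf4o v hvz]
        have hc4fz : (classOf S.p f₄ (S.f x)).card = (classOf S.p S.f (S.f x)).card - 1 := by
          rw [hcls4fz, Finset.card_erase_of_mem hzcls]
        have hc4γ₁ : (classOf S.p f₄ γ₁).card = (classOf S.p S.f γ₁).card + 1 := by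
          rw [hcls4γ₁, Finset.card_insert_of_notMem hznγ₁]
        have hco : (classOf S.p S.f (S.f x)).card = S.s := by rw [hsdef]; exact hfull
        have hSE4 : IsSE S.G S.r S.L S.p f₄ := by
          refine ⟨?_, ?_, ?_, ?_⟩
          · intro v hvp
            rcases eq_or_ne v x with rfl | h1
            · rw [hf4z]; exact hxL
            · rw [hf4o v h1]; exact hLf v hvp
          · intro u v hup hvp hadj
            by_cases huz : u = x
            · have hvz : v ≠ x := fun h => S.G.irrefl (h ▸ huz ▸ hadj)
              rw [huz, hf4z, hf4o v hvz]
              intro h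
              exact hxmov v (mem_classOf.mpr ⟨hvp, h.symm⟩) (huz ▸ hadj)
            · by_cases hvz : v = x
              · rw [hvz, hf4z, hf4o u huz]
                intro h
                exact hxmov u (mem_classOf.mpr ⟨hup, h⟩) (hvz ▸ hadj).symm
              · rw [hf4o u huz, hf4o v hvz]
                exact hProper u v hup hvp hadj
          · intro γ
            rcases eq_or_ne γ (S.f x) with rfl | h1
            · rw [hc4fz]
              exact le_trans (Nat.sub_le _ _) (hSize _)
            · rcases eq_or_ne γ γ₁ with rfl | h2
              · rw [hc4γ₁]
                have : (classOf S.p S.f γ).card < sVal V S.r := by rw [← hsdef]; exact hγ₁lt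
                omega
              · rw [hcls4o γ h1 h2]; exact hSize γ
          · have hfzfull : S.f x ∈ (colorSet S.L).filter
                (fun γ => (classOf S.p S.f γ).card = sVal V S.r) :=
              Finset.mem_filter.mpr ⟨hfzΓ, hfull⟩
            have hsub4 : (colorSet S.L).filter (fun γ => (classOf S.p f₄ γ).card = sVal V S.r)
                ⊆ insert γ₁ (((colorSet S.L).filter
                    (fun γ => (classOf S.p S.f γ).card = sVal V S.r)).erase (S.f x)) := by
              intro γ hγ
              obtain ⟨hγΓ, hγc⟩ := Finset.mem_filter.mp hγ
              rcases eq_or_ne γ γ₁ with rfl | h2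
              · exact Finset.mem_insert_self _ _
              · rcases eq_or_ne γ (S.f x) with rfl | h1
                · exfalso
                  rw [hc4fz] at hγc
                  have h3 : (classOf S.p S.f (S.f x)).card = sVal V S.r := hfull
                  omega
                · rw [hcls4o γ h1 h2] at hγc
                  exact Finset.mem_insert_of_mem
                    (Finset.mem_erase.mpr ⟨h1, Finset.mem_filter.mpr ⟨hγΓ, hγc⟩⟩)
            have h5 := Finset.card_le_card hsub4
            have h6 := Finset.card_insert_le γ₁ (((colorSet S.L).filter
                (fun γ => (classOf S.p S.f γ).card = sVal V S.r)).erase (S.f x))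
            have h7 := Finset.card_erase_of_mem hfzfull
            have h8 : 1 ≤ ((colorSet S.L).filter
                (fun γ => (classOf S.p S.f γ).card = sVal V S.r)).card :=
              Finset.card_pos.mpr ⟨S.f x, hfzfull⟩
            omega
        have hc4lt : (classOf S.p f₄ (S.f x)).card < S.s := by
          rw [hc4fz]; omega
        have hfzΛ4 : S.f x ∈ lamSet S.G S.L S.p f₄ S.s := htriv f₄ (S.f x) hfzΓ hc4lt
        have hγ₁Λ4 : γ₁ ∈ lamSet S.G S.L S.p f₄ S.s := by
          refine Finset.mem_filter.mpr
            ⟨hγ₁Γ, hγ₁Γ, S.f x, hfzΓ, Relation.ReflTransGen.single ?_, hc4lt⟩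
          refine ⟨hγ₁fz, x, mem_classOf.mpr ⟨hzp, hf4z⟩, hLf x hzp, ?_⟩
          intro w hw hadj
          rw [hcls4fz] at hw
          obtain ⟨hw1, hw2⟩ := Finset.mem_erase.mp hw
          obtain ⟨hwp, hwc⟩ := mem_classOf.mp hw2
          exact hProper x w hzp hwp hadj hwc.symm
        have hfyΛ4 : S.f y ∈ lamSet S.G S.L S.p f₄ S.s := by
          refine Finset.mem_filter.mpr
            ⟨hfyΓ, hfyΓ, S.f x, hfzΓ, Relation.ReflTransGen.single ?_, hc4lt⟩
          refine ⟨hfyfz, y, mem_classOf.mpr ⟨hyp, hf4o y (Ne.symm hzy)⟩, hfzLy, ?_⟩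
          intro w hw hadj
          rw [hcls4fz] at hw
          exact (Finset.mem_erase.mp hw).1 (hyuniq w (Finset.mem_of_mem_erase hw) hadj)
        have hΛsub4 : ∀ γ ∈ lamSet S.G S.L S.p S.f S.s, γ ∈ lamSet S.G S.L S.p f₄ S.s := by
          intro γ hγ
          rcases eq_or_ne γ (S.f x) with rfl | h1
          · exact hfzΛ4
          rcases eq_or_ne γ γ₁ with rfl | h2
          · exact hγ₁Λ4
          · refine htriv f₄ γ (Finset.mem_filter.mp hγ).1 ?_
            rw [hcls4o γ h1 h2]
            exact hlight γ hγ h1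
        have hsub : insert y (aSet S.G S.L S.p S.f S.s) ⊆ aSet S.G S.L S.p f₄ S.s := by
          intro v hv
          rcases Finset.mem_insert.mp hv with rfl | hv1
          · exact mem_aSet.mpr ⟨hyp, by rw [hf4o v (Ne.symm hzy)]; exact hfyΛ4⟩
          · obtain ⟨hvp, hvΛ⟩ := mem_aSet.mp hv1
            rcases eq_or_ne v x with rfl | hvz
            · exact mem_aSet.mpr ⟨hzp, by rw [hf4z]; exact hγ₁Λ4⟩
            · exact mem_aSet.mpr ⟨hvp, by rw [hf4o v hvz]; exact hΛsub4 _ hvΛ⟩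
        have hyNA : y ∉ aSet S.G S.L S.p S.f S.s := fun h => hfyNΛ (mem_aSet.mp h).2
        have hc := Finset.card_le_card hsub
        rw [Finset.card_insert_of_notMem hyNA] at hc
        have hO1' : (aSet S.G S.L S.p f₄ S.s).card ≤ (aSet S.G S.L S.p S.f S.s).card :=
          hO1 f₄ hSE4
        omega
      · -- a vertex x ≠ z of z's class is movable to γ₁ : swap z and y
        have harc' : Arc S.G S.L S.p f' (S.f z) γ₁ := by
          refine ⟨hne1, x, ?_, hxL, ?_⟩
          · rw [hcls'fz]
            exact Finset.mem_insert_of_mem (Finset.mem_erase.mpr ⟨hxz, hxmem⟩)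
          · rw [hcls'other γ₁ hγ₁fz hγ₁fy]
            exact hxmov
        exact main γ₁ hγ₁Γ (Relation.ReflTransGen.single harc')
          (by rw [hcls'other γ₁ hγ₁fz hγ₁fy]; exact hγ₁lt)

end EqListColoring
end
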